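/- Under the setting of the mixture formula, if K is convex on probability measures (of finite energy) then for every ν ∈ P(P(X)) concentrated on {K < ∞} with barycenter μ: ∫∫ c dμ⊗μ ≤ ∫_{P(X)} K(Q) dν(Q). That is, the decorrelated measure has energy no larger than any mixture of product measures with the same marginal. -/

import Mathlib

/-!
Let `E(P, Q) = ∫∫ c dQ dP` be the cross energy, so that `K Q = E(Q, Q)`. Since `E` is bilinear and
symmetric, the energy of the midpoint `(Q + Q') / 2` is `(E(Q,Q) + 2 E(Q,Q') + E(Q',Q')) / 4`, and
convexity of `K` at `t = 1/2` is exactly `2 E(Q,Q') ≤ E(Q,Q) + E(Q',Q')`. On the other hand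
`μ ⊗ μ` is the `ν ⊗ ν`-mixture of the products `Q ⊗ Q'`, so the energy of `μ` is
`∫∫ E(Q,Q') dν dν`, and integrating the midpoint inequality over `ν ⊗ ν` bounds it by `∫ K dν`.
The cross energy is taken `ℝ≥0∞`-valued, where it is bilinear without integrability conditions.
-/

open MeasureTheory ENNReal ProbabilityTheory

lemma lintegral_lintegral_le_lintegral_diag {α : Type*} [MeasurableSpace α] (ν : Measure α)
    [IsProbabilityMeasure ν] {E : α → α → ℝ≥0∞}
    (h : ∀ᵐ a ∂ν, ∀ᵐ b ∂ν, 2 * E a b ≤ E a a + E b b) :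
    ∫⁻ a, ∫⁻ b, E a b ∂ν ∂ν ≤ ∫⁻ a, E a a ∂ν := by
  refine (ENNReal.mul_le_mul_iff_right two_ne_zero ofNat_ne_top).1 ?_
  calc 2 * ∫⁻ a, ∫⁻ b, E a b ∂ν ∂ν = ∫⁻ a, ∫⁻ b, 2 * E a b ∂ν ∂ν := by
        simp only [lintegral_const_mul' _ _ ofNat_ne_top]
    _ ≤ ∫⁻ a, ∫⁻ b, E a a + E b b ∂ν ∂ν :=
        lintegral_mono_ae (h.mono fun a ha => lintegral_mono_ae ha)
    _ = 2 * ∫⁻ a, E a a ∂ν := by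
        simp only [lintegral_add_left measurable_const, lintegral_add_right _ measurable_const,
          lintegral_const, measure_univ, mul_one, two_mul]

section CrossEnergy

variable {X : Type*} [MeasurableSpace X] {φ : X → X → ℝ≥0∞}

noncomputable def crossEnergy (φ : X → X → ℝ≥0∞) (P Q : Measure X) : ℝ≥0∞ :=
  ∫⁻ x, ∫⁻ y, φ x y ∂Q ∂P

lemma crossEnergy_add_left (φ : X → X → ℝ≥0∞) (P₁ P₂ Q : Measure X) :
    crossEnergy φ (P₁ + P₂) Q = crossEnergy φ P₁ Q + crossEnergy φ P₂ Q :=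
  lintegral_add_measure _ _ _

lemma crossEnergy_add_right (hφ : Measurable (Function.uncurry φ)) (P Q₁ Q₂ : Measure X)
    [SFinite Q₁] : crossEnergy φ P (Q₁ + Q₂) = crossEnergy φ P Q₁ + crossEnergy φ P Q₂ := by
  simp only [crossEnergy, lintegral_add_measure]
  exact lintegral_add_left hφ.lintegral_prod_right _

lemma crossEnergy_smul_left (φ : X → X → ℝ≥0∞) (a : ℝ≥0∞) (P Q : Measure X) :
    crossEnergy φ (a • P) Q = a * crossEnergy φ P Q :=
  lintegral_smul_measure _ _

lemma crossEnergy_smul_right (hφ : Measurable (Function.uncurry φ)) (a : ℝ≥0∞)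
    (P Q : Measure X) [SFinite Q] : crossEnergy φ P (a • Q) = a * crossEnergy φ P Q := by
  simp only [crossEnergy, lintegral_smul_measure]
  exact lintegral_const_mul _ hφ.lintegral_prod_right

lemma crossEnergy_comm (hφ : Measurable (Function.uncurry φ)) (hsymm : ∀ x y, φ x y = φ y x)
    (P Q : Measure X) [SFinite P] [SFinite Q] : crossEnergy φ P Q = crossEnergy φ Q P := by
  simp only [crossEnergy]
  rw [lintegral_lintegral_swap hφ.aemeasurable]
  simp_rw [hsymm]

lemma crossEnergy_le_of_le {C : ℝ≥0∞} (hC : ∀ x y, φ x y ≤ C) (P Q : Measure X) :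
    crossEnergy φ P Q ≤ C * Q Set.univ * P Set.univ :=
  calc crossEnergy φ P Q ≤ ∫⁻ _, C * Q Set.univ ∂P :=
        lintegral_mono fun x => (lintegral_mono (hC x)).trans_eq (lintegral_const C)
    _ = C * Q Set.univ * P Set.univ := lintegral_const _

lemma two_mul_crossEnergy_le_of_midpoint (hφ : Measurable (Function.uncurry φ))
    (hsymm : ∀ x y, φ x y = φ y x) (Q Q' : Measure X) [SFinite Q] [SFinite Q']
    (hQ : crossEnergy φ Q Q ≠ ∞) (hQ' : crossEnergy φ Q' Q' ≠ ∞)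
    (hmid : crossEnergy φ ((2⁻¹ : ℝ≥0∞) • Q + (2⁻¹ : ℝ≥0∞) • Q')
        ((2⁻¹ : ℝ≥0∞) • Q + (2⁻¹ : ℝ≥0∞) • Q')
      ≤ 2⁻¹ * crossEnergy φ Q Q + 2⁻¹ * crossEnergy φ Q' Q') :
    2 * crossEnergy φ Q Q' ≤ crossEnergy φ Q Q + crossEnergy φ Q' Q' := by
  set A := crossEnergy φ Q Q
  set C := crossEnergy φ Q' Q'
  rw [← smul_add, ← mul_add, crossEnergy_smul_left, crossEnergy_smul_right hφ,
    crossEnergy_add_left, crossEnergy_add_right hφ, crossEnergy_add_right hφ,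
    crossEnergy_comm hφ hsymm Q' Q,
    ENNReal.mul_le_mul_iff_right (by simp) (by simp), ENNReal.inv_mul_le_iff (by simp) (by simp)]
    at hmid
  refine (ENNReal.add_le_add_iff_left (add_ne_top.2 ⟨hQ, hQ'⟩)).1 ?_
  calc A + C + 2 * crossEnergy φ Q Q' = A + crossEnergy φ Q Q' + (crossEnergy φ Q Q' + C) := by
        ring
    _ ≤ 2 * (A + C) := hmid
    _ = A + C + (A + C) := two_mul _

lemma integral_integral_eq_toReal_crossEnergy {c : X → X → ℝ}
    (hc : Measurable (Function.uncurry c)) (hc_nonneg : ∀ x y, 0 ≤ c x y) {M : ℝ}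
    (hcM : ∀ x y, c x y ≤ M) (P Q : Measure X) [IsFiniteMeasure Q] :
    ∫ x, ∫ y, c x y ∂Q ∂P = (crossEnergy (fun x y => ENNReal.ofReal (c x y)) P Q).toReal := by
  have hinner : ∀ x, ∫ y, c x y ∂Q = (∫⁻ y, ENNReal.ofReal (c x y) ∂Q).toReal := fun x =>
    integral_eq_lintegral_of_nonneg_ae (.of_forall (hc_nonneg x))
      (hc.comp measurable_prodMk_left).aestronglyMeasurable
  simp_rw [hinner]
  refine integral_toReal hc.ennreal_ofReal.lintegral_prod_right.aemeasurable
    (.of_forall fun x => ?_)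
  calc ∫⁻ y, ENNReal.ofReal (c x y) ∂Q ≤ ∫⁻ _, ENNReal.ofReal M ∂Q :=
        lintegral_mono fun y => ofReal_le_ofReal (hcM x y)
    _ < ∞ := by simp [lintegral_const, mul_lt_top]

lemma two_mul_crossEnergy_le_of_integral_midpoint {c : X → X → ℝ}
    (hc : Measurable (Function.uncurry c)) (hc_symm : ∀ x y, c x y = c y x)
    (hc_nonneg : ∀ x y, 0 ≤ c x y) {M : ℝ} (hcM : ∀ x y, c x y ≤ M)
    (Q Q' : Measure X) [IsProbabilityMeasure Q] [IsProbabilityMeasure Q']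
    (hmid : ∫ x, ∫ y, c x y ∂((2⁻¹ : ℝ≥0∞) • Q + (2⁻¹ : ℝ≥0∞) • Q')
        ∂((2⁻¹ : ℝ≥0∞) • Q + (2⁻¹ : ℝ≥0∞) • Q')
      ≤ 2⁻¹ * ∫ x, ∫ y, c x y ∂Q ∂Q + 2⁻¹ * ∫ x, ∫ y, c x y ∂Q' ∂Q') :
    2 * crossEnergy (fun x y => ENNReal.ofReal (c x y)) Q Q' ≤
      crossEnergy (fun x y => ENNReal.ofReal (c x y)) Q Q +
        crossEnergy (fun x y => ENNReal.ofReal (c x y)) Q' Q' := by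
  have : IsProbabilityMeasure ((2⁻¹ : ℝ≥0∞) • Q + (2⁻¹ : ℝ≥0∞) • Q') :=
    ⟨by simp [ENNReal.inv_two_add_inv_two]⟩
  have hfin : ∀ (P : Measure X) [IsProbabilityMeasure P],
      crossEnergy (fun x y => ENNReal.ofReal (c x y)) P P ≠ ∞ := fun P _ =>
    ((crossEnergy_le_of_le (fun x y => ofReal_le_ofReal (hcM x y)) P P).trans_lt
      (by simp)).ne
  simp only [integral_integral_eq_toReal_crossEnergy hc hc_nonneg hcM] at hmid
  refine two_mul_crossEnergy_le_of_midpoint hc.ennreal_ofReal (fun x y => by rw [hc_symm])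
    Q Q' (hfin Q) (hfin Q') ((toReal_le_toReal (hfin _) (by simp [mul_ne_top, hfin])).1 ?_)
  simpa [toReal_add, mul_ne_top, hfin] using hmid

end CrossEnergy

section Mixtures

variable {X : Type*} [MeasurableSpace X] {φ : X → X → ℝ≥0∞}

/-- Parametric integrals `a ↦ ∫⁻ x, f a x ∂κ a` are measurable for s-finite kernels `κ`, which the
identity of `Measure X` is not; truncated to probability measures it becomes a finite kernel. -/
noncomputable def probKernel (X : Type*) [MeasurableSpace X] : Kernel (Measure X) X where
  toFun Q := if Q Set.univ = 1 then Q else 0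
  measurable' := by
    refine Measure.measurable_of_measurable_coe _ fun s hs => ?_
    simp only [apply_ite (fun Q : Measure X => Q s), Measure.coe_zero, Pi.zero_apply]
    exact Measurable.ite (Measure.measurable_coe .univ (measurableSet_singleton 1))
      (Measure.measurable_coe hs) measurable_const

instance : IsFiniteKernel (probKernel X) :=
  ⟨⟨1, one_lt_top, fun Q => by by_cases h : Q Set.univ = 1 <;> simp [probKernel, h]⟩⟩

lemma probKernel_apply (Q : Measure X) [IsProbabilityMeasure Q] : probKernel X Q = Q := by
  simp [probKernel]

lemma measurable_lintegral_probKernel {α : Type*} [MeasurableSpace α] {f : α → X → ℝ≥0∞}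
    (hf : Measurable (Function.uncurry f)) :
    Measurable fun p : α × Measure X => ∫⁻ x, f p.1 x ∂probKernel X p.2 :=
  Measurable.lintegral_kernel_prod_right (κ := Kernel.prodMkLeft α (probKernel X))
    (f := fun p x => f p.1 x) (hf.comp (measurable_fst.fst.prodMk measurable_snd))

lemma aemeasurable_crossEnergy_self (hφ : Measurable (Function.uncurry φ))
    {ν : Measure (Measure X)} (hν : ∀ᵐ Q ∂ν, IsProbabilityMeasure Q) :
    AEMeasurable (fun Q => crossEnergy φ Q Q) ν := by
  have hinner := measurable_lintegral_probKernel hφ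
  have hdiag := measurable_lintegral_probKernel
    (f := fun Q x => ∫⁻ y, φ x y ∂probKernel X Q) (hinner.comp measurable_swap)
  refine ⟨_, hdiag.comp (measurable_id.prodMk measurable_id), hν.mono fun Q hQ => ?_⟩
  simp [crossEnergy, probKernel_apply]

lemma lintegral_prod_join (hφ : Measurable (Function.uncurry φ)) (ν : Measure (Measure X))
    [IsProbabilityMeasure ν] (hν : ∀ᵐ Q ∂ν, IsProbabilityMeasure Q) :
    ∫⁻ p, φ p.1 p.2 ∂(ν.join.prod ν.join) = ∫⁻ Q, ∫⁻ Q', crossEnergy φ Q Q' ∂ν ∂ν := by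
  have := isProbabilityMeasure_join hν
  set G : X → Measure X → ℝ≥0∞ := fun x Q' => ∫⁻ y, φ x y ∂probKernel X Q'
  have hG : Measurable (Function.uncurry G) := measurable_lintegral_probKernel hφ
  have hinner : ∀ x, ∫⁻ y, φ x y ∂ν.join = ∫⁻ Q', G x Q' ∂ν := fun x => by
    rw [Measure.lintegral_join (f := φ x) (hφ.comp measurable_prodMk_left).aemeasurable]
    exact lintegral_congr_ae (hν.mono fun Q' hQ' => by simp [G, probKernel_apply])
  rw [lintegral_prod (fun p => φ p.1 p.2) hφ.aemeasurable]
  simp_rw [hinner]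
  rw [Measure.lintegral_join hG.lintegral_prod_right.aemeasurable]
  refine lintegral_congr_ae (hν.mono fun Q hQ => ?_)
  beta_reduce
  rw [lintegral_lintegral_swap hG.aemeasurable]
  exact lintegral_congr_ae (hν.mono fun Q' hQ' => by simp [G, crossEnergy, probKernel_apply])

end Mixtures

theorem stmt_12_general {X : Type*}
    [MeasurableSpace X]
    (c : X → X → ℝ)
    (hc_meas : Measurable fun p : X × X => c p.1 p.2)
    (hc_bdd : ∃ M : ℝ, ∀ x y, |c x y| ≤ M)
    (hc_symm : ∀ x y, c x y = c y x)
    (hc_nonneg : ∀ x y, 0 ≤ c x y)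
    (K : Measure X → ℝ)
    (hK : ∀ Q : Measure X, K Q = ∫ x, ∫ y, c x y ∂Q ∂Q)
    (hconv : ∀ (Q Q' : Measure X), IsProbabilityMeasure Q → IsProbabilityMeasure Q' →
      ∀ t : ℝ, 0 ≤ t → t ≤ 1 →
        K (ENNReal.ofReal t • Q + ENNReal.ofReal (1 - t) • Q')
          ≤ t * K Q + (1 - t) * K Q')
    (ν : Measure (Measure X)) [IsProbabilityMeasure ν]
    (hν : ∀ᵐ Q ∂ν, IsProbabilityMeasure Q)
    (μ : Measure X) (hμ : μ = ν.join) :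
    ∫ p : X × X, c p.1 p.2 ∂(μ.prod μ) ≤ ∫ Q, K Q ∂ν := by
  obtain ⟨M, hM⟩ := hc_bdd
  have hcM : ∀ x y, c x y ≤ M := fun x y => (le_abs_self _).trans (hM x y)
  set φ : X → X → ℝ≥0∞ := fun x y => ENNReal.ofReal (c x y)
  have hφ : Measurable (Function.uncurry φ) := hc_meas.ennreal_ofReal
  have hE_le : ∀ (Q : Measure X) [IsProbabilityMeasure Q], crossEnergy φ Q Q ≤ ENNReal.ofReal M :=
    fun Q _ => by simpa using crossEnergy_le_of_le (fun x y => ofReal_le_ofReal (hcM x y)) Q Q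
  have hmid : ∀ (Q Q' : Measure X), IsProbabilityMeasure Q → IsProbabilityMeasure Q' →
      2 * crossEnergy φ Q Q' ≤ crossEnergy φ Q Q + crossEnergy φ Q' Q' := fun Q Q' _ _ =>
    two_mul_crossEnergy_le_of_integral_midpoint hc_meas hc_symm hc_nonneg hcM Q Q' <| by
      simpa [hK, show (1 : ℝ) - 2⁻¹ = 2⁻¹ by norm_num] using
        hconv Q Q' ‹_› ‹_› 2⁻¹ (by norm_num) (by norm_num)
  calc ∫ p, c p.1 p.2 ∂(μ.prod μ) = (∫⁻ Q, ∫⁻ Q', crossEnergy φ Q Q' ∂ν ∂ν).toReal := by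
        rw [integral_eq_lintegral_of_nonneg_ae (f := fun p : X × X => c p.1 p.2)
          (.of_forall fun p => hc_nonneg p.1 p.2) hc_meas.aestronglyMeasurable, hμ,
          lintegral_prod_join hφ ν hν]
    _ ≤ (∫⁻ Q, crossEnergy φ Q Q ∂ν).toReal :=
        toReal_mono ((lintegral_mono_ae (hν.mono fun Q _ => hE_le Q)).trans_lt (by simp)).ne
          (lintegral_lintegral_le_lintegral_diag ν
            (hν.mono fun Q hQ => hν.mono fun Q' hQ' => hmid Q Q' hQ hQ'))
    _ = ∫ Q, K Q ∂ν := by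
        rw [← integral_toReal (aemeasurable_crossEnergy_self hφ hν)
          (hν.mono fun Q _ => (hE_le Q).trans_lt ofReal_lt_top)]
        exact integral_congr_ae (hν.mono fun Q _ => by
          rw [hK, integral_integral_eq_toReal_crossEnergy hc_meas hc_nonneg hcM])

/-- If `K` is convex on probability measures then the energy of the barycenter `μ` of `ν`
is at most the average energy `∫ K dν`. -/
theorem stmt_12 {X : Type*} [TopologicalSpace X] [PolishSpace X]
    [MeasurableSpace X] [BorelSpace X]
    (c : X → X → ℝ)
    (hc_meas : Measurable fun p : X × X => c p.1 p.2)
    (hc_bdd : ∃ M : ℝ, ∀ x y, |c x y| ≤ M)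
    (hc_symm : ∀ x y, c x y = c y x)
    (hc_nonneg : ∀ x y, 0 ≤ c x y)
    (K : Measure X → ℝ)
    (hK : ∀ Q : Measure X, K Q = ∫ x, ∫ y, c x y ∂Q ∂Q)
    (hconv : ∀ (Q Q' : Measure X), IsProbabilityMeasure Q → IsProbabilityMeasure Q' →
      ∀ t : ℝ, 0 ≤ t → t ≤ 1 →
        K (ENNReal.ofReal t • Q + ENNReal.ofReal (1 - t) • Q')
          ≤ t * K Q + (1 - t) * K Q')
    (ν : Measure (Measure X)) [IsProbabilityMeasure ν]
    (hν : ∀ᵐ Q ∂ν, IsProbabilityMeasure Q)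
    (μ : Measure X) (hμ : μ = ν.join) :
    ∫ p : X × X, c p.1 p.2 ∂(μ.prod μ) ≤ ∫ Q, K Q ∂ν :=
  stmt_12_general c hc_meas hc_bdd hc_symm hc_nonneg K hK hconv ν hν μ hμ
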